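/- arXiv:1302.6397 — 6 statements merged into one kernel-verified Lean document; each statement's English description precedes it below -/
import Mathlib

section
/- The subspace 𝔲(3) = {X ∈ 𝔰𝔬(7) : X e₀ = 0 and XE = EX} is a Lie subalgebra of 𝔰𝔬(7), one has the direct sum decomposition 𝔰𝔬(7) = 𝔪 ⊕ 𝔲(3), and [𝔲(3), 𝔪] ⊆ 𝔪, i.e. 𝔪 is invariant under the adjoint action of 𝔲(3). -/
/-!
Common setup: 𝔤 = 𝔰𝔬(7) realised as real skew-symmetric 7×7 matrices with
bracket `bk X Y = X*Y - Y*X`; the matrices A, B, C, A', B', C', P, Q, R, P', Q', R', E;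
the subspaces 𝔪 (`mm`) and 𝔲(3) (`u3`); the dual functionals a, …, r' (written
`fa, …, fr'`), given by the explicit formulas that characterise them as the unique
linear functionals on 𝔰𝔬(7) vanishing on 𝔲(3) whose restrictions to 𝔪 are dual to
the chosen basis; the invariant forms; the endomorphisms I, J, K; and the
Chevalley–Eilenberg differentials `dM1`, `dM2` restricted to 𝔪.
-/

open Matrix

noncomputable section

/-- Ambient space of real 7×7 matrices (rows/columns indexed by `Fin 7`). -/
abbrev M7 : Type := Matrix (Fin 7) (Fin 7) ℝ

/-- `Eij i j`: the skew matrix with `(i,j)` entry `1`, `(j,i)` entry `-1`, all others `0`. -/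
def Eij (i j : Fin 7) : M7 := Matrix.single i j 1 - Matrix.single j i 1

def mA  : M7 := Eij 0 1
def mB  : M7 := Eij 0 2
def mC  : M7 := Eij 0 3
def mA' : M7 := Eij 0 4
def mB' : M7 := Eij 0 5
def mC' : M7 := Eij 0 6
def mP  : M7 := Eij 2 3 - Eij 5 6
def mQ  : M7 := Eij 3 1 - Eij 6 4
def mR  : M7 := Eij 1 2 - Eij 4 5
def mP' : M7 := Eij 2 6 - Eij 3 5
def mQ' : M7 := Eij 3 4 - Eij 1 6
def mR' : M7 := Eij 1 5 - Eij 2 4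
def mE  : M7 := Eij 1 4 + Eij 2 5 + Eij 3 6

/-- The Lie bracket `[X,Y] = XY - YX`. -/
def bk (X Y : M7) : M7 := X * Y - Y * X

/-- 𝔰𝔬(7): the skew-symmetric matrices. -/
def so7 : Set M7 := {X : M7 | Xᵀ = -X}

/-- The first standard basis vector e₀ of ℝ⁷. -/
def e0 : Fin 7 → ℝ := fun i => if i = 0 then 1 else 0

/-- 𝔲(3) = {X ∈ 𝔰𝔬(7) : X e₀ = 0 and XE = EX}. -/
def u3 : Set M7 := {X : M7 | Xᵀ = -X ∧ X.mulVec e0 = 0 ∧ X * mE = mE * X}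

/-- 𝔪: the span of the twelve matrices A, …, R'. -/
def mm : Submodule ℝ M7 :=
  Submodule.span ℝ ({mA, mB, mC, mA', mB', mC', mP, mQ, mR, mP', mQ', mR'} : Set M7)

/- The linear functionals on 𝔰𝔬(7) vanishing on 𝔲(3) whose restrictions to 𝔪 form the
dual basis of the basis A, …, R' (given by their explicit formulas on skew matrices,
extended to all of `M7`). -/
def fa  (X : M7) : ℝ := (X 0 1 - X 1 0) / 2
def fb  (X : M7) : ℝ := (X 0 2 - X 2 0) / 2
def fc  (X : M7) : ℝ := (X 0 3 - X 3 0) / 2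
def fa' (X : M7) : ℝ := (X 0 4 - X 4 0) / 2
def fb' (X : M7) : ℝ := (X 0 5 - X 5 0) / 2
def fc' (X : M7) : ℝ := (X 0 6 - X 6 0) / 2
def fp  (X : M7) : ℝ := (X 2 3 - X 3 2 - X 5 6 + X 6 5) / 4
def fq  (X : M7) : ℝ := (X 3 1 - X 1 3 - X 6 4 + X 4 6) / 4
def fr  (X : M7) : ℝ := (X 1 2 - X 2 1 - X 4 5 + X 5 4) / 4
def fp' (X : M7) : ℝ := (X 2 6 - X 6 2 - X 3 5 + X 5 3) / 4
def fq' (X : M7) : ℝ := (X 3 4 - X 4 3 - X 1 6 + X 6 1) / 4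
def fr' (X : M7) : ℝ := (X 1 5 - X 5 1 - X 2 4 + X 4 2) / 4

/-- Wedge of two 1-forms: `(α∧β)(X,Y) = α(X)β(Y) - β(X)α(Y)`. -/
def wdg2 (α β : M7 → ℝ) (X Y : M7) : ℝ := α X * β Y - β X * α Y

/-- Wedge of three 1-forms (determinant convention). -/
def wdg3 (α β γ : M7 → ℝ) (X Y Z : M7) : ℝ :=
  α X * β Y * γ Z - α X * γ Y * β Z - β X * α Y * γ Z
    + β X * γ Y * α Z + γ X * α Y * β Z - γ X * β Y * α Z

/-- ω₀ = a'∧a + b'∧b + c'∧c. -/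
def om0 (X Y : M7) : ℝ := wdg2 fa' fa X Y + wdg2 fb' fb X Y + wdg2 fc' fc X Y

/-- ω̃₀ = p'∧p + q'∧q + r'∧r. -/
def omt0 (X Y : M7) : ℝ := wdg2 fp' fp X Y + wdg2 fq' fq X Y + wdg2 fr' fr X Y

/-- ω_J = p∧a - p'∧a' + q∧b - q'∧b' + r∧c - r'∧c'. -/
def omJ (X Y : M7) : ℝ :=
  wdg2 fp fa X Y - wdg2 fp' fa' X Y + wdg2 fq fb X Y - wdg2 fq' fb' X Y
    + wdg2 fr fc X Y - wdg2 fr' fc' X Y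

/-- ω_K = p'∧a + p∧a' + q'∧b + q∧b' + r'∧c + r∧c'. -/
def omK (X Y : M7) : ℝ :=
  wdg2 fp' fa X Y + wdg2 fp fa' X Y + wdg2 fq' fb X Y + wdg2 fq fb' X Y
    + wdg2 fr' fc X Y + wdg2 fr fc' X Y

/-- ω_I = λω₀ + μω̃₀. -/
def omI (lm mu : ℝ) (X Y : M7) : ℝ := lm * om0 X Y + mu * omt0 X Y

/-- The metric g = λ(a⊗a + … + c'⊗c') + μ(p⊗p + … + r'⊗r'). -/
def gmet (lm mu : ℝ) (X Y : M7) : ℝ :=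
  lm * (fa X * fa Y + fb X * fb Y + fc X * fc Y
      + fa' X * fa' Y + fb' X * fb' Y + fc' X * fc' Y)
  + mu * (fp X * fp Y + fq X * fq Y + fr X * fr Y
      + fp' X * fp' Y + fq' X * fq' Y + fr' X * fr' Y)

/-- The endomorphism I of 𝔪 (extended to `M7` via the dual functionals):
A↦A', …, R↦R', A'↦-A, …, R'↦-R. -/
def Iop (X : M7) : M7 :=
  fa X • mA' + fb X • mB' + fc X • mC' + fp X • mP' + fq X • mQ' + fr X • mR'
    - fa' X • mA - fb' X • mB - fc' X • mC - fp' X • mP - fq' X • mQ - fr' X • mR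

/-- The endomorphism J of 𝔪: A↦λP, …, C'↦-λR', P↦-μA, …, R'↦μC'. -/
def Jop (lm mu : ℝ) (X : M7) : M7 :=
  (lm * fa X) • mP + (lm * fb X) • mQ + (lm * fc X) • mR
    - (lm * fa' X) • mP' - (lm * fb' X) • mQ' - (lm * fc' X) • mR'
    - (mu * fp X) • mA - (mu * fq X) • mB - (mu * fr X) • mC
    + (mu * fp' X) • mA' + (mu * fq' X) • mB' + (mu * fr' X) • mC'

/-- The endomorphism K of 𝔪: A↦λP', …, C'↦λR, P'↦-μA, …, R↦-μC'. -/
def Kop (lm mu : ℝ) (X : M7) : M7 :=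
  (lm * fa X) • mP' + (lm * fb X) • mQ' + (lm * fc X) • mR'
    + (lm * fa' X) • mP + (lm * fb' X) • mQ + (lm * fc' X) • mR
    - (mu * fp' X) • mA - (mu * fq' X) • mB - (mu * fr' X) • mC
    - (mu * fp X) • mA' - (mu * fq X) • mB' - (mu * fr X) • mC'

/-- `d_Mα(X,Y) = -α([X,Y])` for a 1-form α. -/
def dM1 (α : M7 → ℝ) (X Y : M7) : ℝ := -α (bk X Y)

/-- `d_Mω(X,Y,Z) = -ω([X,Y],Z) + ω([X,Z],Y) - ω([Y,Z],X)` for a 2-form ω. -/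
def dM2 (ω : M7 → M7 → ℝ) (X Y Z : M7) : ℝ :=
  -ω (bk X Y) Z + ω (bk X Z) Y - ω (bk Y Z) X

/-- For an endomorphism T and a 3-form β, `(Tβ)(X,Y,Z) = -β(TX,TY,TZ)`. -/
def act3 (T : M7 → M7) (β : M7 → M7 → M7 → ℝ) (X Y Z : M7) : ℝ :=
  -β (T X) (T Y) (T Z)

/-- Φ = Σ_cyc (a∧b∧r - a'∧b'∧r + a∧b'∧r' + a'∧b∧r'). -/
def Phi (X Y Z : M7) : ℝ :=
  (wdg3 fa fb fr X Y Z - wdg3 fa' fb' fr X Y Z + wdg3 fa fb' fr' X Y Z + wdg3 fa' fb fr' X Y Z)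
  + (wdg3 fb fc fp X Y Z - wdg3 fb' fc' fp X Y Z + wdg3 fb fc' fp' X Y Z + wdg3 fb' fc fp' X Y Z)
  + (wdg3 fc fa fq X Y Z - wdg3 fc' fa' fq X Y Z + wdg3 fc fa' fq' X Y Z + wdg3 fc' fa fq' X Y Z)

/-- Ψ = Σ_cyc (p∧q∧r - 3 p∧q'∧r'). -/
def Psi (X Y Z : M7) : ℝ :=
  (wdg3 fp fq fr X Y Z - 3 * wdg3 fp fq' fr' X Y Z)
  + (wdg3 fq fr fp X Y Z - 3 * wdg3 fq fr' fp' X Y Z)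
  + (wdg3 fr fp fq X Y Z - 3 * wdg3 fr fp' fq' X Y Z)

/-- β_I = J d_Mω_J + K d_Mω_K. -/
def betaI (lm mu : ℝ) (X Y Z : M7) : ℝ :=
  act3 (Jop lm mu) (dM2 omJ) X Y Z + act3 (Kop lm mu) (dM2 omK) X Y Z

/-- β_J = K d_Mω_K + I d_Mω_I. -/
def betaJ (lm mu : ℝ) (X Y Z : M7) : ℝ :=
  act3 (Kop lm mu) (dM2 omK) X Y Z + act3 Iop (dM2 (omI lm mu)) X Y Z

/-- β_K = I d_Mω_I + J d_Mω_J. -/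
def betaK (lm mu : ℝ) (X Y Z : M7) : ℝ :=
  act3 Iop (dM2 (omI lm mu)) X Y Z + act3 (Jop lm mu) (dM2 omJ) X Y Z

/-- ψ⁽³⁾ = (1/12)(β_I + β_J + β_K). -/
def psi3 (lm mu : ℝ) (X Y Z : M7) : ℝ :=
  (1/12) * (betaI lm mu X Y Z + betaJ lm mu X Y Z + betaK lm mu X Y Z)

end

/-!
On `e₀^⊥ ≅ ℝ⁶` the matrix `E` is a complex structure (`E e₀ = 0` and `E² = e₀e₀ᵀ - 1`), and `𝔲(3)`
is its centralizer in `𝔰𝔬(6)`. The map `X ↦ ½(E²XE² - EXE)` sends a skew matrix to the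
complex-linear part of its `ℝ⁶`-block, which lies in `𝔲(3)` and is fixed by the map; so `𝔰𝔬(7)`
splits into `𝔲(3)` and the kernel of the map. This kernel is `ad 𝔲(3)`-invariant because the map
commutes with `ad W` whenever `W` commutes with `E`. The only coordinate computation is that the
kernel is spanned by `A, …, R'`.
-/

namespace Matrix

variable {n : Type*}

theorem apply_eq_neg_of_transpose_eq_neg {α : Type*} [Neg α] {X : Matrix n n α} (hX : Xᵀ = -X)
    (a b : n) : X b a = -X a b :=
  congrFun (congrFun hX a) b

theorem single_one_mul_single_one {l m o α : Type*} [Fintype m] [DecidableEq l] [DecidableEq m]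
    [DecidableEq o] [Semiring α] (i : l) (j k : m) (p : o) :
    single i j (1 : α) * single k p (1 : α) = if j = k then single i p (1 : α) else 0 := by
  split_ifs with h
  · rw [h, single_mul_single_same, mul_one]
  · exact single_mul_single_of_ne (h := h) (d := 1) ..

variable [Fintype n]

theorem single_sub_one_mul_mul_single_sub_one_apply {α : Type*} [DecidableEq n] [Ring α]
    (X : Matrix n n α) {i a b : n} (ha : a ≠ i) (hb : b ≠ i) :
    ((single i i (1 : α) - 1) * X * (single i i 1 - 1) : Matrix n n α) a b = X a b := by
  simp [sub_mul, mul_sub, single_mul_apply_of_ne, mul_single_apply_of_ne, ha, hb, ha.symm]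

section CommRing

variable {R : Type*} [CommRing R]

theorem transpose_mul_sub_mul {X Y : Matrix n n R} (hX : Xᵀ = -X) (hY : Yᵀ = -Y) :
    (X * Y - Y * X)ᵀ = -(X * Y - Y * X) := by
  rw [transpose_sub, transpose_mul, transpose_mul, hX, hY, neg_mul_neg, neg_mul_neg, neg_sub]

theorem mul_mul_self_eq_neg [DecidableEq n] {E Z : Matrix n n R} {v : n → R}
    (hEE : E * E = vecMulVec v v - 1) (hZ : Z *ᵥ v = 0) : Z * (E * E) = -Z := by
  rw [hEE, mul_sub, mul_vecMulVec, hZ, zero_vecMulVec, mul_one, zero_sub]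

def skewStabilizer (E : Matrix n n R) (v : n → R) : Submodule R (Matrix n n R) where
  carrier := {Z | Zᵀ = -Z ∧ Z *ᵥ v = 0 ∧ Z * E = E * Z}
  zero_mem' := by simp
  add_mem' := by
    rintro X Y ⟨hX, hXv, hXE⟩ ⟨hY, hYv, hYE⟩
    refine ⟨?_, ?_, ?_⟩
    · rw [transpose_add, hX, hY, neg_add]
    · rw [add_mulVec, hXv, hYv, add_zero]
    · rw [add_mul, mul_add, hXE, hYE]
  smul_mem' := by
    rintro c X ⟨hX, hXv, hXE⟩
    refine ⟨?_, ?_, ?_⟩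
    · rw [transpose_smul, hX, smul_neg]
    · rw [smul_mulVec, hXv, smul_zero]
    · rw [Matrix.smul_mul, Matrix.mul_smul, hXE]

theorem mul_sub_mul_mem_skewStabilizer {E X Y : Matrix n n R} {v : n → R}
    (hX : X ∈ skewStabilizer E v) (hY : Y ∈ skewStabilizer E v) :
    X * Y - Y * X ∈ skewStabilizer E v := by
  obtain ⟨hX, hXv, hXE⟩ := hX
  obtain ⟨hY, hYv, hYE⟩ := hY
  refine ⟨transpose_mul_sub_mul hX hY, ?_, ?_⟩
  · rw [sub_mulVec, ← mulVec_mulVec, ← mulVec_mulVec, hXv, hYv, mulVec_zero, mulVec_zero,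
      sub_zero]
  · simp only [sub_mul, mul_sub, mul_assoc, hXE, hYE]
    simp only [← mul_assoc, hXE, hYE]

end CommRing

variable {K : Type*} [Field K]

def linearPart (E : Matrix n n K) : Matrix n n K →ₗ[K] Matrix n n K where
  toFun X := (2⁻¹ : K) • (E * E * X * (E * E) - E * X * E)
  map_add' X Y := by simp only [mul_add, add_mul]; module
  map_smul' c X := by simp only [Matrix.mul_smul, Matrix.smul_mul, RingHom.id_apply]; module

theorem linearPart_apply (E X : Matrix n n K) :
    linearPart E X = (2⁻¹ : K) • (E * E * X * (E * E) - E * X * E) := rfl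

def skewKerLinearPart (E : Matrix n n K) : Submodule K (Matrix n n K) where
  carrier := {X | Xᵀ = -X ∧ linearPart E X = 0}
  zero_mem' := by simp
  add_mem' := by
    rintro X Y ⟨hX, hXE⟩ ⟨hY, hYE⟩
    refine ⟨?_, ?_⟩
    · rw [transpose_add, hX, hY, neg_add]
    · rw [map_add, hXE, hYE, add_zero]
  smul_mem' := by
    rintro c X ⟨hX, hXE⟩
    refine ⟨?_, ?_⟩
    · rw [transpose_smul, hX, smul_neg]
    · rw [map_smul, hXE, smul_zero]

variable {E : Matrix n n K} {v : n → K}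

theorem linearPart_mul_eq_mul_linearPart [DecidableEq n] (hEv : E *ᵥ v = 0)
    (hEE : E * E = vecMulVec v v - 1) (X : Matrix n n K) :
    linearPart E X * E = E * linearPart E X := by
  have hE3 : E * (E * E) = -E := mul_mul_self_eq_neg hEE hEv
  have hE3' (Y : Matrix n n K) : E * (E * (E * Y)) = -(E * Y) := by
    rw [← mul_assoc, ← mul_assoc, mul_assoc E E E, hE3, neg_mul]
  simp only [linearPart_apply, Matrix.smul_mul, Matrix.mul_smul, sub_mul, mul_sub, mul_assoc,
    hE3, hE3', mul_neg]
  module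

theorem linearPart_mulVec_eq_zero (hEv : E *ᵥ v = 0) (X : Matrix n n K) :
    linearPart E X *ᵥ v = 0 := by
  simp only [linearPart_apply, smul_mulVec, sub_mulVec, ← mulVec_mulVec, hEv, mulVec_zero,
    sub_zero, smul_zero]

theorem transpose_linearPart (hE : Eᵀ = -E) (X : Matrix n n K) :
    (linearPart E X)ᵀ = linearPart E Xᵀ := by
  simp only [linearPart_apply, transpose_smul, transpose_sub, transpose_mul, hE,
    mul_neg, neg_mul, neg_neg, mul_assoc]

theorem linearPart_mem_skewStabilizer [DecidableEq n] (hE : Eᵀ = -E) (hEv : E *ᵥ v = 0)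
    (hEE : E * E = vecMulVec v v - 1) {X : Matrix n n K} (hX : Xᵀ = -X) :
    linearPart E X ∈ skewStabilizer E v :=
  ⟨by rw [transpose_linearPart hE, hX, map_neg], linearPart_mulVec_eq_zero hEv X,
    linearPart_mul_eq_mul_linearPart hEv hEE X⟩

theorem linearPart_eq_self_of_mem_skewStabilizer [DecidableEq n] [NeZero (2 : K)]
    (hEE : E * E = vecMulVec v v - 1) {Z : Matrix n n K} (hZ : Z ∈ skewStabilizer E v) :
    linearPart E Z = Z := by
  obtain ⟨-, hZv, hZE⟩ := hZ
  have hZEE : Z * (E * E) = -Z := mul_mul_self_eq_neg hEE hZv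
  have hEEZ : E * E * Z = Z * (E * E) := by
    rw [mul_assoc, ← hZE, ← mul_assoc, ← hZE, mul_assoc]
  have hEEZEE : E * E * Z * (E * E) = Z := by rw [hEEZ, hZEE, neg_mul, hZEE, neg_neg]
  have hEZE : E * Z * E = -Z := by rw [← hZE, mul_assoc, hZEE]
  rw [linearPart_apply, hEEZEE, hEZE, sub_neg_eq_add, ← two_smul K Z, smul_smul,
    inv_mul_cancel₀ two_ne_zero, one_smul]

theorem linearPart_mul_sub_mul {W : Matrix n n K} (hWE : W * E = E * W) (X : Matrix n n K) :
    linearPart E (W * X - X * W) = W * linearPart E X - linearPart E X * W := by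
  have hWE' (Y : Matrix n n K) : W * (E * Y) = E * (W * Y) := by rw [← mul_assoc, hWE, mul_assoc]
  simp only [linearPart_apply, Matrix.smul_mul, Matrix.mul_smul, sub_mul, mul_sub, mul_assoc,
    hWE', hWE, smul_sub]
  abel

theorem mul_sub_mul_mem_skewKerLinearPart {W X : Matrix n n K} (hW : W ∈ skewStabilizer E v)
    (hX : X ∈ skewKerLinearPart E) : W * X - X * W ∈ skewKerLinearPart E := by
  obtain ⟨hWt, -, hWE⟩ := hW
  obtain ⟨hXt, hXE⟩ := hX
  refine ⟨transpose_mul_sub_mul hWt hXt, ?_⟩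
  rw [linearPart_mul_sub_mul hWE, hXE, mul_zero, zero_mul, sub_zero]

theorem sub_linearPart_mem_skewKerLinearPart [DecidableEq n] [NeZero (2 : K)] (hE : Eᵀ = -E)
    (hEv : E *ᵥ v = 0) (hEE : E * E = vecMulVec v v - 1) {X : Matrix n n K} (hX : Xᵀ = -X) :
    X - linearPart E X ∈ skewKerLinearPart E := by
  have hL := linearPart_mem_skewStabilizer hE hEv hEE hX
  refine ⟨by rw [transpose_sub, hX, hL.1, neg_sub_neg, neg_sub], ?_⟩
  rw [map_sub, linearPart_eq_self_of_mem_skewStabilizer hEE hL, sub_self]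

theorem eq_zero_of_mem_skewKerLinearPart_of_mem_skewStabilizer [DecidableEq n] [NeZero (2 : K)]
    (hEE : E * E = vecMulVec v v - 1) {X : Matrix n n K} (hX : X ∈ skewKerLinearPart E)
    (hX' : X ∈ skewStabilizer E v) : X = 0 := by
  rw [← linearPart_eq_self_of_mem_skewStabilizer hEE hX', hX.2]

end Matrix

theorem mE_transpose : mEᵀ = -mE := by
  simp only [mE, Eij, transpose_add, transpose_sub, transpose_single]
  abel

theorem mE_mulVec_e0 : mE *ᵥ e0 = 0 := by
  ext i
  fin_cases i <;> simp [mE, Eij, mulVec, dotProduct, e0, single_apply]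

theorem mE_mul_mE : mE * mE = vecMulVec e0 e0 - 1 := by
  ext a b
  fin_cases a <;> fin_cases b <;>
    simp [mE, Eij, mul_apply, e0, single_apply, vecMulVec_apply, one_apply]

theorem linearPart_mE_eq_zero_iff (X : M7) : linearPart mE X = 0 ↔
    (single 0 0 1 - 1) * X * (single 0 0 1 - 1) = mE * X * mE := by
  have he0 : vecMulVec e0 e0 = single 0 0 (1 : ℝ) := by
    rw [single_eq_single_vecMulVec_single]
    congr <;> funext i <;> simp [e0, Pi.single_apply]
  rw [linearPart_apply, mE_mul_mE, he0, smul_eq_zero, sub_eq_zero]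
  norm_num

theorem mm_le_skewKerLinearPart : mm ≤ skewKerLinearPart mE := by
  rw [mm, Submodule.span_le]
  simp only [Set.insert_subset_iff, Set.singleton_subset_iff, SetLike.mem_coe]
  refine ⟨?_, ?_, ?_, ?_, ?_, ?_, ?_, ?_, ?_, ?_, ?_, ?_⟩ <;>
    refine ⟨?_, (linearPart_mE_eq_zero_iff _).2 ?_⟩ <;>
    simp only [mA, mB, mC, mA', mB', mC', mP, mQ, mR, mP', mQ', mR', Eij, transpose_sub,
      transpose_single, mE, sub_mul, mul_sub, add_mul, mul_add, one_mul, mul_one,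
      single_one_mul_single_one, zero_mul, Fin.reduceEq, reduceIte] <;>
    abel

noncomputable def mmProj (X : M7) : M7 :=
  fa X • mA + fb X • mB + fc X • mC + fa' X • mA' + fb' X • mB' + fc' X • mC'
    + fp X • mP + fq X • mQ + fr X • mR + fp' X • mP' + fq' X • mQ' + fr' X • mR'

theorem mmProj_mem_mm (X : M7) : mmProj X ∈ mm := by
  unfold mmProj
  repeat' apply add_mem
  all_goals exact Submodule.smul_mem _ _ (Submodule.subset_span (by simp))

theorem entries_of_mem_skewKerLinearPart {X : M7} (hX : X ∈ skewKerLinearPart mE) :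
    X 1 4 = 0 ∧ X 2 5 = 0 ∧ X 3 6 = 0 ∧ X 4 5 = -X 1 2 ∧ X 4 6 = -X 1 3 ∧ X 5 6 = -X 2 3 ∧
      X 2 4 = -X 1 5 ∧ X 3 4 = -X 1 6 ∧ X 3 5 = -X 2 6 := by
  have hs := apply_eq_neg_of_transpose_eq_neg hX.1
  have hr (a b : Fin 7) (ha : a ≠ 0) (hb : b ≠ 0) : X a b = (mE * X * mE) a b := by
    rw [← (linearPart_mE_eq_zero_iff X).1 hX.2, single_sub_one_mul_mul_single_sub_one_apply X ha hb]
  have r1 := hr 1 4 (by decide) (by decide)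
  have r2 := hr 2 5 (by decide) (by decide)
  have r3 := hr 3 6 (by decide) (by decide)
  have r4 := hr 1 2 (by decide) (by decide)
  have r5 := hr 1 3 (by decide) (by decide)
  have r6 := hr 2 3 (by decide) (by decide)
  have r7 := hr 1 5 (by decide) (by decide)
  have r8 := hr 1 6 (by decide) (by decide)
  have r9 := hr 2 6 (by decide) (by decide)
  simp only [mE, Eij, add_mul, mul_add, sub_mul, mul_sub, single_mul_mul_single, Matrix.add_apply,
    Matrix.sub_apply, Matrix.single_apply] at r1 r2 r3 r4 r5 r6 r7 r8 r9
  simp (config := { decide := true }) only [if_true, if_false, sub_zero, zero_sub, add_zero,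
    zero_add, sub_self, mul_one, one_mul] at r1 r2 r3 r4 r5 r6 r7 r8 r9
  refine ⟨?_, ?_, ?_, ?_, ?_, ?_, ?_, ?_, ?_⟩ <;>
    linarith [hs 1 4, hs 2 5, hs 3 6, hs 2 4, hs 3 4, hs 3 5]

theorem mmProj_eq_self_of_mem_skewKerLinearPart {X : M7} (hX : X ∈ skewKerLinearPart mE) :
    mmProj X = X := by
  have hs := apply_eq_neg_of_transpose_eq_neg hX.1
  have hd (a : Fin 7) : X a a = 0 := by linarith [hs a a]
  obtain ⟨h14, h25, h36, h45, h46, h56, h24, h34, h35⟩ := entries_of_mem_skewKerLinearPart hX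
  ext a b
  simp only [mmProj, fa, fb, fc, fa', fb', fc', fp, fq, fr, fp', fq', fr', mA, mB, mC, mA', mB',
    mC', mP, mQ, mR, mP', mQ', mR', Eij, Matrix.add_apply, Matrix.sub_apply, Matrix.smul_apply,
    Matrix.single_apply, smul_eq_mul]
  fin_cases a <;> fin_cases b <;>
    simp (config := { decide := true }) only [Fin.reduceFinMk, Fin.isValue, if_true, if_false,
      hd, hs 0 1, hs 0 2, hs 0 3, hs 0 4, hs 0 5, hs 0 6, hs 1 2, hs 1 3, hs 1 4, hs 1 5, hs 1 6,
      hs 2 3, hs 2 4, hs 2 5, hs 2 6, hs 3 4, hs 3 5, hs 3 6, hs 4 5, hs 4 6, hs 5 6,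
      h45, h46, h56, h14, h25, h36, h24, h34, h35] <;>
    ring

theorem skewKerLinearPart_mE_le_mm : skewKerLinearPart mE ≤ mm := fun X hX =>
  mmProj_eq_self_of_mem_skewKerLinearPart hX ▸ mmProj_mem_mm X

theorem mm_eq_skewKerLinearPart : mm = skewKerLinearPart mE :=
  le_antisymm mm_le_skewKerLinearPart skewKerLinearPart_mE_le_mm

theorem u3_eq_skewStabilizer : u3 = skewStabilizer mE e0 := rfl

/-- 𝔲(3) is a Lie subalgebra of 𝔰𝔬(7), 𝔰𝔬(7) = 𝔪 ⊕ 𝔲(3), and [𝔲(3), 𝔪] ⊆ 𝔪. -/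
theorem stmt0 :
    -- 𝔲(3) is a Lie subalgebra of 𝔰𝔬(7):
    ((0 : M7) ∈ u3) ∧
    (∀ X ∈ u3, ∀ Y ∈ u3, X + Y ∈ u3) ∧
    (∀ (t : ℝ), ∀ X ∈ u3, t • X ∈ u3) ∧
    (∀ X ∈ u3, ∀ Y ∈ u3, bk X Y ∈ u3) ∧
    (u3 ⊆ so7) ∧
    -- direct sum decomposition 𝔰𝔬(7) = 𝔪 ⊕ 𝔲(3):
    ((mm : Set M7) ⊆ so7) ∧
    (∀ X ∈ so7, ∃ Y ∈ mm, ∃ Z ∈ u3, X = Y + Z) ∧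
    (∀ X : M7, X ∈ mm → X ∈ u3 → X = 0) ∧
    -- 𝔪 is invariant under the adjoint action of 𝔲(3):
    (∀ W ∈ u3, ∀ X ∈ mm, bk W X ∈ mm) := by
  have hE := mE_transpose
  have hEv := mE_mulVec_e0
  have hEE := mE_mul_mE
  rw [u3_eq_skewStabilizer, mm_eq_skewKerLinearPart]
  refine ⟨zero_mem _, fun X hX Y hY => add_mem hX hY, fun t X hX => Submodule.smul_mem _ t hX,
    fun X hX Y hY => mul_sub_mul_mem_skewStabilizer hX hY, fun X hX => hX.1, fun X hX => hX.1,
    fun X hX => ?_, fun X hX hX' => eq_zero_of_mem_skewKerLinearPart_of_mem_skewStabilizer hEE hX hX',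
    fun W hW X hX => mul_sub_mul_mem_skewKerLinearPart hW hX⟩
  exact ⟨X - linearPart mE X, sub_linearPart_mem_skewKerLinearPart hE hEv hEE hX,
    linearPart mE X, linearPart_mem_skewStabilizer hE hEv hEE hX, (sub_add_cancel _ _).symm⟩
end

section
/- For every W ∈ 𝔲(3) and all X, Y ∈ 𝔪 one has ω₀([W,X],Y) + ω₀(X,[W,Y]) = 0 and ω̃₀([W,X],Y) + ω̃₀(X,[W,Y]) = 0, and for all real λ, μ one has g([W,X],Y) + g(X,[W,Y]) = 0; that is, ω₀, ω̃₀ and g are invariant under the adjoint action of 𝔲(3) on 𝔪. -/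
/-!
Common setup: 𝔤 = 𝔰𝔬(7) realised as real skew-symmetric 7×7 matrices with
bracket `bk X Y = X*Y - Y*X`; the matrices A, B, C, A', B', C', P, Q, R, P', Q', R', E;
the subspaces 𝔪 (`mm`) and 𝔲(3) (`u3`); the dual functionals a, …, r' (written
`fa, …, fr'`), given by the explicit formulas that characterise them as the unique
linear functionals on 𝔰𝔬(7) vanishing on 𝔲(3) whose restrictions to 𝔪 are dual to
the chosen basis; the invariant forms; the endomorphisms I, J, K; and the
Chevalley–Eilenberg differentials `dM1`, `dM2` restricted to 𝔪.
-/

open Matrix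

/-!
On skew-symmetric matrices the three forms are expressions in the (0,0)-entry and the trace:
ω₀(X,Y) = (XEY)₀₀, ω̃₀(X,Y) = (tr(XEY) - (XEY)₀₀)/4 and
g(X,Y) = -λ(XY)₀₀ + μ(2(XY)₀₀ - tr(XY) - tr(XEYE))/8.
If W commutes with S then [W,X]SY + XS[W,Y] = [W,XSY], and for W ∈ 𝔲(3) both the trace and the
(0,0)-entry vanish on commutators [W,M]: the trace always, the entry because W kills e₀.
Since W also commutes with E, each form is ad W-invariant on all of 𝔰𝔬(7) ⊇ 𝔪.
-/

open Matrix

lemma mem_so7 {X : M7} : X ∈ so7 ↔ Xᵀ = -X := Iff.rfl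

lemma Eij_transpose (i j : Fin 7) : (Eij i j)ᵀ = -Eij i j := by
  simp [Eij]

lemma mem_so7_of_mem_mm {X : M7} (hX : X ∈ mm) : X ∈ so7 := by
  induction hX using Submodule.span_induction with
  | mem X hX =>
    simp only [Set.mem_insert_iff, Set.mem_singleton_iff] at hX
    rcases hX with rfl | rfl | rfl | rfl | rfl | rfl | rfl | rfl | rfl | rfl | rfl | rfl <;>
      simp [mem_so7, mA, mB, mC, mA', mB', mC', mP, mQ, mR, mP', mQ', mR', Eij_transpose,
        neg_add_eq_sub]
  | zero => simp [mem_so7]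
  | add X Y _ _ hX hY => rw [mem_so7, transpose_add, mem_so7.mp hX, mem_so7.mp hY, neg_add]
  | smul c X _ hX => rw [mem_so7, transpose_smul, mem_so7.mp hX, smul_neg]

lemma apply_swap_of_mem_so7 {X : M7} (hX : X ∈ so7) (i j : Fin 7) : X j i = -X i j := by
  simpa using congrFun₂ (mem_so7.mp hX) i j

-- The side condition `i < j` makes this a terminating simp rule: it rewrites only the
-- entries below the diagonal.
lemma apply_of_lt_of_mem_so7 {X : M7} (hX : X ∈ so7) {i j : Fin 7} (_ : i < j) :
    X j i = -X i j :=
  apply_swap_of_mem_so7 hX i j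

lemma apply_self_of_mem_so7 {X : M7} (hX : X ∈ so7) (i : Fin 7) : X i i = 0 := by
  have := apply_swap_of_mem_so7 hX i i
  linarith

lemma om0_eq {X Y : M7} (hX : X ∈ so7) (hY : Y ∈ so7) : om0 X Y = (X * mE * Y) 0 0 := by
  simp only [om0, wdg2, fa, fb, fc, fa', fb', fc', mul_apply, Fin.sum_univ_seven,
    mE, Eij, Matrix.add_apply, Matrix.sub_apply, single_apply,
    apply_of_lt_of_mem_so7 hX, apply_of_lt_of_mem_so7 hY,
    Fin.reduceLT, Fin.isValue, Fin.reduceEq, and_false, false_and, and_self, ↓reduceIte]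
  ring

lemma omt0_eq {X Y : M7} (hX : X ∈ so7) (hY : Y ∈ so7) :
    omt0 X Y = (trace (X * mE * Y) - (X * mE * Y) 0 0) / 4 := by
  simp only [omt0, wdg2, fp, fq, fr, fp', fq', fr', trace, diag_apply, mul_apply,
    Fin.sum_univ_seven, mE, Eij, Matrix.add_apply, Matrix.sub_apply, single_apply,
    apply_of_lt_of_mem_so7 hX, apply_of_lt_of_mem_so7 hY,
    apply_self_of_mem_so7 hX, apply_self_of_mem_so7 hY,
    Fin.reduceLT, Fin.isValue, Fin.reduceEq, and_false, false_and, and_self, ↓reduceIte]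
  ring

lemma gmet_eq {X Y : M7} (hX : X ∈ so7) (hY : Y ∈ so7) (lm mu : ℝ) :
    gmet lm mu X Y = -lm * (X * Y) 0 0
      + mu / 8 * (2 * (X * Y) 0 0 - trace (X * Y) - trace (X * mE * Y * mE)) := by
  simp only [gmet, fa, fb, fc, fa', fb', fc', fp, fq, fr, fp', fq', fr', trace, diag_apply,
    mul_apply, Fin.sum_univ_seven, mE, Eij, Matrix.add_apply, Matrix.sub_apply, single_apply,
    apply_of_lt_of_mem_so7 hX, apply_of_lt_of_mem_so7 hY,
    apply_self_of_mem_so7 hX, apply_self_of_mem_so7 hY,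
    Fin.reduceLT, Fin.isValue, Fin.reduceEq, and_false, false_and, and_self, ↓reduceIte]
  ring

lemma bk_mem_so7 {W X : M7} (hW : W ∈ so7) (hX : X ∈ so7) : bk W X ∈ so7 := by
  rw [mem_so7] at hW hX ⊢
  rw [bk, transpose_sub, transpose_mul, transpose_mul, hW, hX, neg_mul_neg, neg_mul_neg, neg_sub]

lemma bk_mul_of_commute {W S : M7} (hS : Commute W S) (M : M7) : bk W M * S = bk W (M * S) := by
  rw [bk, bk, sub_mul, mul_assoc, mul_assoc, hS.eq, mul_assoc]

lemma bk_mul_mul_add_mul_mul_bk {W S : M7} (hS : Commute W S) (X Y : M7) :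
    bk W X * S * Y + X * S * bk W Y = bk W (X * S * Y) := by
  have hXWS : X * W * S * Y = X * S * W * Y := by rw [mul_assoc X, hS.eq, ← mul_assoc]
  simp only [bk, sub_mul, mul_sub, ← mul_assoc, hXWS]
  abel

lemma trace_bk (W M : M7) : trace (bk W M) = 0 := by
  rw [bk, trace_sub, trace_mul_comm, sub_self]

lemma trace_bk_mul {W S : M7} (hS : Commute W S) (M : M7) : trace (bk W M * S) = 0 := by
  rw [bk_mul_of_commute hS, trace_bk]

lemma apply_zero_of_mem_u3 {W : M7} (hW : W ∈ u3) (i : Fin 7) : W i 0 = 0 := by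
  have he0 : e0 = Pi.single 0 1 := by
    ext j
    simp [e0, Pi.single_apply]
  simpa [he0, mulVec_single_one] using congrFun hW.2.1 i

lemma zero_apply_of_mem_u3 {W : M7} (hW : W ∈ u3) (j : Fin 7) : W 0 j = 0 := by
  rw [apply_swap_of_mem_so7 hW.1, apply_zero_of_mem_u3 hW, neg_zero]

lemma bk_apply_zero_zero {W : M7} (hW : W ∈ u3) (M : M7) : bk W M 0 0 = 0 := by
  simp [bk, mul_apply, zero_apply_of_mem_u3 hW, apply_zero_of_mem_u3 hW]

section AdInvariance

variable {W X Y : M7}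

lemma om0_ad_invariant (hW : W ∈ u3) (hX : X ∈ so7) (hY : Y ∈ so7) :
    om0 (bk W X) Y + om0 X (bk W Y) = 0 := by
  rw [om0_eq (bk_mem_so7 hW.1 hX) hY, om0_eq hX (bk_mem_so7 hW.1 hY), ← Matrix.add_apply,
    bk_mul_mul_add_mul_mul_bk hW.2.2, bk_apply_zero_zero hW]

lemma omt0_ad_invariant (hW : W ∈ u3) (hX : X ∈ so7) (hY : Y ∈ so7) :
    omt0 (bk W X) Y + omt0 X (bk W Y) = 0 := by
  have hE := bk_mul_mul_add_mul_mul_bk hW.2.2 X Y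
  have h00 : (bk W X * mE * Y) 0 0 + (X * mE * bk W Y) 0 0 = 0 := by
    rw [← Matrix.add_apply, hE, bk_apply_zero_zero hW]
  have htr : trace (bk W X * mE * Y) + trace (X * mE * bk W Y) = 0 := by
    rw [← trace_add, hE, trace_bk]
  rw [omt0_eq (bk_mem_so7 hW.1 hX) hY, omt0_eq hX (bk_mem_so7 hW.1 hY)]
  linear_combination (htr - h00) / 4

lemma gmet_ad_invariant (hW : W ∈ u3) (hX : X ∈ so7) (hY : Y ∈ so7) (lm mu : ℝ) :
    gmet lm mu (bk W X) Y + gmet lm mu X (bk W Y) = 0 := by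
  have h1 : bk W X * Y + X * bk W Y = bk W (X * Y) := by
    simpa using bk_mul_mul_add_mul_mul_bk (Commute.one_right W) X Y
  have h00 : (bk W X * Y) 0 0 + (X * bk W Y) 0 0 = 0 := by
    rw [← Matrix.add_apply, h1, bk_apply_zero_zero hW]
  have htr : trace (bk W X * Y) + trace (X * bk W Y) = 0 := by
    rw [← trace_add, h1, trace_bk]
  have htrE : trace (bk W X * mE * Y * mE) + trace (X * mE * bk W Y * mE) = 0 := by
    rw [← trace_add, ← add_mul, bk_mul_mul_add_mul_mul_bk hW.2.2, trace_bk_mul hW.2.2]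
  rw [gmet_eq (bk_mem_so7 hW.1 hX) hY, gmet_eq hX (bk_mem_so7 hW.1 hY)]
  linear_combination (-lm + mu / 4) * h00 - mu / 8 * (htr + htrE)

end AdInvariance

/-- ω₀, ω̃₀ and g are invariant under the adjoint action of 𝔲(3) on 𝔪. -/
theorem stmt1 :
    ∀ W ∈ u3, ∀ X ∈ mm, ∀ Y ∈ mm,
      (om0 (bk W X) Y + om0 X (bk W Y) = 0) ∧
      (omt0 (bk W X) Y + omt0 X (bk W Y) = 0) ∧
      (∀ lm mu : ℝ, gmet lm mu (bk W X) Y + gmet lm mu X (bk W Y) = 0) := by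
  intro W hW X hX Y hY
  have hX' := mem_so7_of_mem_mm hX
  have hY' := mem_so7_of_mem_mm hY
  exact ⟨om0_ad_invariant hW hX' hY', omt0_ad_invariant hW hX' hY',
    gmet_ad_invariant hW hX' hY'⟩
end

section
/- The central element E of 𝔲(3) rotates the pair (ω_J, ω_K) with speed 3: for all X, Y ∈ 𝔪 one has ω_J([E,X],Y) + ω_J(X,[E,Y]) = 3 ω_K(X,Y) and ω_K([E,X],Y) + ω_K(X,[E,Y]) = −3 ω_J(X,Y). In particular the two-dimensional span of ω_J and ω_K is invariant under the adjoint action of 𝔲(3), although neither form is itself invariant. -/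
/-!
Common setup: 𝔤 = 𝔰𝔬(7) realised as real skew-symmetric 7×7 matrices with
bracket `bk X Y = X*Y - Y*X`; the matrices A, B, C, A', B', C', P, Q, R, P', Q', R', E;
the subspaces 𝔪 (`mm`) and 𝔲(3) (`u3`); the dual functionals a, …, r' (written
`fa, …, fr'`), given by the explicit formulas that characterise them as the unique
linear functionals on 𝔰𝔬(7) vanishing on 𝔲(3) whose restrictions to 𝔪 are dual to
the chosen basis; the invariant forms; the endomorphisms I, J, K; and the
Chevalley–Eilenberg differentials `dM1`, `dM2` restricted to 𝔪.
-/

open Matrix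

/-!
Identify `span(e₁, …, e₆)` with `ℂ³` through the complex structure `E`. An element of `𝔲(3)` is
then a block matrix `[[S, T], [-T, S]]` on `e₁, …, e₆` (and zero on `e₀`) with `S` skew and `T`
symmetric. The complex form `ω_J + iω_K` pairs `span(A, B, C, A', B', C') ≅ ℂ³` with
`span(P, Q, R, P', Q', R') ≅ Λ²ℂ³` into `Λ³ℂ³`, so `𝔲(3)` acts on it through the trace character:
`W` multiplies it by `-i tr T`. For `E` one has `T = 1`, whence the speed `3`. In coordinates
(nine parameters for `𝔲(3)`, twelve for `𝔪`) both rotation identities are polynomial identities.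
-/

/-- `[[S, T], [-T, S]]` on `e₁, …, e₆`, with `S` skew (entries `a b c`) and `T` symmetric
(diagonal `d e f`, off-diagonal `g h k`). -/
def u3Mat (a b c d e f g h k : ℝ) : M7 :=
  !![0, 0, 0, 0, 0, 0, 0;
     0, 0, a, b, d, g, h;
     0, -a, 0, c, g, e, k;
     0, -b, -c, 0, h, k, f;
     0, -d, -g, -h, 0, a, b;
     0, -g, -e, -k, -a, 0, c;
     0, -h, -k, -f, -b, -c, 0]

/-- The trace of the symmetric block `T` of `W ∈ 𝔲(3)`. -/
def u3Trace (W : M7) : ℝ := W 1 4 + W 2 5 + W 3 6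

lemma mE_eq_u3Mat : mE = u3Mat 0 0 0 1 1 1 0 0 0 := by
  ext i j
  fin_cases i <;> fin_cases j <;> simp [mE, Eij, u3Mat]

lemma u3Mat_mem_u3 (a b c d e f g h k : ℝ) : u3Mat a b c d e f g h k ∈ u3 := by
  refine ⟨?_, ?_, ?_⟩
  · ext i j
    fin_cases i <;> fin_cases j <;> simp [u3Mat]
  · ext i
    fin_cases i <;> simp [u3Mat, mulVec, dotProduct, e0]
  · rw [mE_eq_u3Mat]
    ext i j
    fin_cases i <;> fin_cases j <;> simp [u3Mat, mul_apply, Fin.sum_univ_seven]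

lemma mE_mem_u3 : mE ∈ u3 := mE_eq_u3Mat ▸ u3Mat_mem_u3 ..

lemma u3Trace_u3Mat (a b c d e f g h k : ℝ) : u3Trace (u3Mat a b c d e f g h k) = d + e + f := by
  simp [u3Trace, u3Mat]

lemma u3Trace_mE : u3Trace mE = 3 := by
  rw [mE_eq_u3Mat, u3Trace_u3Mat]
  norm_num

lemma eq_u3Mat_of_mem_u3 {W : M7} (hW : W ∈ u3) :
    W = u3Mat (W 1 2) (W 1 3) (W 2 3) (W 1 4) (W 2 5) (W 3 6) (W 1 5) (W 1 6) (W 2 6) := by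
  obtain ⟨hskew, he0, hcomm⟩ := hW
  have skew (i j : Fin 7) : W j i = -W i j := by simpa using congrFun₂ hskew i j
  have col0 (i : Fin 7) : W i 0 = 0 := by
    simpa [mulVec, dotProduct, e0, Fin.sum_univ_seven] using congrFun he0 i
  have row0 (i : Fin 7) : W 0 i = 0 := by rw [skew, col0, neg_zero]
  have diag (i : Fin 7) : W i i = 0 := by linarith [skew i i]
  have comm (i j : Fin 7) : (W * mE) i j = (mE * W) i j := by rw [hcomm]
  -- entries (1,5), (1,6), (2,6) make the two diagonal blocks equal; (1,2), (1,3), (2,3) make the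
  -- off-diagonal blocks `T` and `-T` with `T` symmetric
  have c₁ := comm 1 5
  have c₂ := comm 1 6
  have c₃ := comm 2 6
  have c₄ := comm 1 2
  have c₅ := comm 1 3
  have c₆ := comm 2 3
  simp only [mE_eq_u3Mat, u3Mat, mul_apply, of_apply, cons_val', cons_val, cons_val_fin_one,
    Fin.sum_univ_seven, cons_val_zero, cons_val_one, neg_zero, mul_zero, add_zero, mul_one,
    zero_add, zero_mul, one_mul, mul_neg] at c₁ c₂ c₃ c₄ c₅ c₆
  ext i j
  fin_cases i <;> fin_cases j <;> simp [u3Mat, col0, row0, diag] <;>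
    linarith [skew 1 2, skew 1 3, skew 1 4, skew 1 5, skew 1 6, skew 2 3, skew 2 4, skew 2 5,
      skew 2 6, skew 3 4, skew 3 5, skew 3 6, skew 4 5, skew 4 6, skew 5 6]

def mmBasis : Fin 12 → M7 := ![mA, mB, mC, mA', mB', mC', mP, mQ, mR, mP', mQ', mR']

def mmMat (x : Fin 12 → ℝ) : M7 :=
  !![0, x 0, x 1, x 2, x 3, x 4, x 5;
     -x 0, 0, x 8, -x 7, 0, x 11, -x 10;
     -x 1, -x 8, 0, x 6, -x 11, 0, x 9;
     -x 2, x 7, -x 6, 0, x 10, -x 9, 0;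
     -x 3, 0, x 11, -x 10, 0, -x 8, x 7;
     -x 4, -x 11, 0, x 9, x 8, 0, -x 6;
     -x 5, x 10, -x 9, 0, -x 7, x 6, 0]

lemma mm_eq_span_range_mmBasis : mm = Submodule.span ℝ (Set.range mmBasis) := by
  simp only [mm, mmBasis, range_cons, range_empty, Set.singleton_union, Set.union_empty]

lemma sum_smul_mmBasis (x : Fin 12 → ℝ) : ∑ i, x i • mmBasis i = mmMat x := by
  ext i j
  fin_cases i <;> fin_cases j <;>
    simp [Fin.sum_univ_succ, mmBasis, mmMat, mA, mB, mC, mA', mB', mC', mP, mQ, mR, mP', mQ', mR',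
      Eij]

lemma exists_eq_mmMat_of_mem_mm {X : M7} (hX : X ∈ mm) : ∃ x, X = mmMat x := by
  rw [mm_eq_span_range_mmBasis, Submodule.mem_span_range_iff_exists_fun] at hX
  obtain ⟨x, rfl⟩ := hX
  exact ⟨x, sum_smul_mmBasis x⟩

section Rotation

variable (a b c d e f g h k : ℝ) (x y : Fin 12 → ℝ)

lemma omJ_bk_u3Mat_mmMat :
    omJ (bk (u3Mat a b c d e f g h k) (mmMat x)) (mmMat y)
      + omJ (mmMat x) (bk (u3Mat a b c d e f g h k) (mmMat y))
      = (d + e + f) * omK (mmMat x) (mmMat y) := by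
  simp only [omJ, omK, wdg2, fa, fb, fc, fa', fb', fc', fp, fq, fr, fp', fq', fr', bk,
    Matrix.sub_apply, mul_apply, Fin.sum_univ_seven, u3Mat, mmMat, of_apply, cons_val,
    cons_val_zero, cons_val_one]
  ring

lemma omK_bk_u3Mat_mmMat :
    omK (bk (u3Mat a b c d e f g h k) (mmMat x)) (mmMat y)
      + omK (mmMat x) (bk (u3Mat a b c d e f g h k) (mmMat y))
      = -(d + e + f) * omJ (mmMat x) (mmMat y) := by
  simp only [omJ, omK, wdg2, fa, fb, fc, fa', fb', fc', fp, fq, fr, fp', fq', fr', bk,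
    Matrix.sub_apply, mul_apply, Fin.sum_univ_seven, u3Mat, mmMat, of_apply, cons_val,
    cons_val_zero, cons_val_one]
  ring

end Rotation

theorem omJ_bk_add_omJ_bk_of_mem_u3 {W X Y : M7} (hW : W ∈ u3) (hX : X ∈ mm) (hY : Y ∈ mm) :
    omJ (bk W X) Y + omJ X (bk W Y) = u3Trace W * omK X Y := by
  obtain ⟨x, rfl⟩ := exists_eq_mmMat_of_mem_mm hX
  obtain ⟨y, rfl⟩ := exists_eq_mmMat_of_mem_mm hY
  rw [eq_u3Mat_of_mem_u3 hW, omJ_bk_u3Mat_mmMat, u3Trace_u3Mat]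

theorem omK_bk_add_omK_bk_of_mem_u3 {W X Y : M7} (hW : W ∈ u3) (hX : X ∈ mm) (hY : Y ∈ mm) :
    omK (bk W X) Y + omK X (bk W Y) = -u3Trace W * omJ X Y := by
  obtain ⟨x, rfl⟩ := exists_eq_mmMat_of_mem_mm hX
  obtain ⟨y, rfl⟩ := exists_eq_mmMat_of_mem_mm hY
  rw [eq_u3Mat_of_mem_u3 hW, omK_bk_u3Mat_mmMat, u3Trace_u3Mat]

lemma omJ_mA_mP : omJ mA mP = -1 := by
  norm_num [omJ, wdg2, fa, fb, fc, fa', fb', fc', fp, fq, fr, fp', fq', fr', mA, mP, Eij,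
    single_apply, Fin.ext_iff]

lemma omK_mA_mP' : omK mA mP' = -1 := by
  norm_num [omK, wdg2, fa, fb, fc, fa', fb', fc', fp, fq, fr, fp', fq', fr', mA, mP', Eij,
    single_apply, Fin.ext_iff]

/-- E rotates (ω_J, ω_K) with speed 3; the span of ω_J, ω_K is invariant
under the adjoint action of 𝔲(3), but neither form is itself invariant. -/
theorem stmt4 :
    (∀ X ∈ mm, ∀ Y ∈ mm,
      (omJ (bk mE X) Y + omJ X (bk mE Y) = 3 * omK X Y) ∧
      (omK (bk mE X) Y + omK X (bk mE Y) = -3 * omJ X Y)) ∧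
    (∀ W ∈ u3, ∃ s t : ℝ, ∀ X ∈ mm, ∀ Y ∈ mm,
      omJ (bk W X) Y + omJ X (bk W Y) = s * omJ X Y + t * omK X Y) ∧
    (∀ W ∈ u3, ∃ s t : ℝ, ∀ X ∈ mm, ∀ Y ∈ mm,
      omK (bk W X) Y + omK X (bk W Y) = s * omJ X Y + t * omK X Y) ∧
    ¬ (∀ W ∈ u3, ∀ X ∈ mm, ∀ Y ∈ mm, omJ (bk W X) Y + omJ X (bk W Y) = 0) ∧
    ¬ (∀ W ∈ u3, ∀ X ∈ mm, ∀ Y ∈ mm, omK (bk W X) Y + omK X (bk W Y) = 0) := by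
  have hA : mA ∈ mm := Submodule.subset_span (by simp)
  have hP : mP ∈ mm := Submodule.subset_span (by simp)
  have hP' : mP' ∈ mm := Submodule.subset_span (by simp)
  refine ⟨fun X hX Y hY => ?_, fun W hW => ⟨0, u3Trace W, fun X hX Y hY => ?_⟩,
    fun W hW => ⟨-u3Trace W, 0, fun X hX Y hY => ?_⟩, fun h => ?_, fun h => ?_⟩
  · rw [omJ_bk_add_omJ_bk_of_mem_u3 mE_mem_u3 hX hY, omK_bk_add_omK_bk_of_mem_u3 mE_mem_u3 hX hY,
      u3Trace_mE]
    exact ⟨rfl, rfl⟩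
  · rw [omJ_bk_add_omJ_bk_of_mem_u3 hW hX hY]
    ring
  · rw [omK_bk_add_omK_bk_of_mem_u3 hW hX hY]
    ring
  · have h₀ := h mE mE_mem_u3 mA hA mP' hP'
    rw [omJ_bk_add_omJ_bk_of_mem_u3 mE_mem_u3 hA hP', u3Trace_mE, omK_mA_mP'] at h₀
    norm_num at h₀
  · have h₀ := h mE mE_mem_u3 mA hA mP hP
    rw [omK_bk_add_omK_bk_of_mem_u3 mE_mem_u3 hA hP, u3Trace_mE, omJ_mA_mP] at h₀
    norm_num at h₀
end

section
/- For λ, μ > 0 with λμ = 1, the bilinear form g is compatible with I, J, K: for every T ∈ {I, J, K} and all X, Y ∈ 𝔪 one has g(TX, TY) = g(X, Y); moreover ω_I(X,Y) = g(X, IY), ω_J(X,Y) = g(X, JY) and ω_K(X,Y) = g(X, KY) for all X, Y ∈ 𝔪. -/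
/-!
Common setup: 𝔤 = 𝔰𝔬(7) realised as real skew-symmetric 7×7 matrices with
bracket `bk X Y = X*Y - Y*X`; the matrices A, B, C, A', B', C', P, Q, R, P', Q', R', E;
the subspaces 𝔪 (`mm`) and 𝔲(3) (`u3`); the dual functionals a, …, r' (written
`fa, …, fr'`), given by the explicit formulas that characterise them as the unique
linear functionals on 𝔰𝔬(7) vanishing on 𝔲(3) whose restrictions to 𝔪 are dual to
the chosen basis; the invariant forms; the endomorphisms I, J, K; and the
Chevalley–Eilenberg differentials `dM1`, `dM2` restricted to 𝔪.
-/

open Matrix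

/-! In the coordinates `a, …, r'` each of `I`, `J`, `K` is a signed permutation of the coordinates,
scaled by `λ` when it maps the block `A, …, C'` to the block `P, …, R'` and by `μ` the other way.
Since `g` weighs these blocks by `λ` and `μ`, each identity for `J` and `K` holds up to the factor
`λμ`, and those for `I` hold exactly. -/

section Coordinates

attribute [local simp] fa fb fc fa' fb' fc' fp fq fr fp' fq' fr'
  mA mB mC mA' mB' mC' mP mQ mR mP' mQ' mR' Eij

variable (lm mu : ℝ) (X : M7)

lemma coords_Iop :
    fa (Iop X) = -fa' X ∧ fb (Iop X) = -fb' X ∧ fc (Iop X) = -fc' X ∧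
    fa' (Iop X) = fa X ∧ fb' (Iop X) = fb X ∧ fc' (Iop X) = fc X ∧
    fp (Iop X) = -fp' X ∧ fq (Iop X) = -fq' X ∧ fr (Iop X) = -fr' X ∧
    fp' (Iop X) = fp X ∧ fq' (Iop X) = fq X ∧ fr' (Iop X) = fr X := by
  simp [Iop]
  ring_nf
  simp only [and_self]

lemma coords_Jop :
    fa (Jop lm mu X) = -(mu * fp X) ∧ fb (Jop lm mu X) = -(mu * fq X) ∧
    fc (Jop lm mu X) = -(mu * fr X) ∧
    fa' (Jop lm mu X) = mu * fp' X ∧ fb' (Jop lm mu X) = mu * fq' X ∧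
    fc' (Jop lm mu X) = mu * fr' X ∧
    fp (Jop lm mu X) = lm * fa X ∧ fq (Jop lm mu X) = lm * fb X ∧ fr (Jop lm mu X) = lm * fc X ∧
    fp' (Jop lm mu X) = -(lm * fa' X) ∧ fq' (Jop lm mu X) = -(lm * fb' X) ∧
    fr' (Jop lm mu X) = -(lm * fc' X) := by
  simp [Jop]
  ring_nf
  simp only [and_self]

lemma coords_Kop :
    fa (Kop lm mu X) = -(mu * fp' X) ∧ fb (Kop lm mu X) = -(mu * fq' X) ∧
    fc (Kop lm mu X) = -(mu * fr' X) ∧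
    fa' (Kop lm mu X) = -(mu * fp X) ∧ fb' (Kop lm mu X) = -(mu * fq X) ∧
    fc' (Kop lm mu X) = -(mu * fr X) ∧
    fp (Kop lm mu X) = lm * fa' X ∧ fq (Kop lm mu X) = lm * fb' X ∧
    fr (Kop lm mu X) = lm * fc' X ∧
    fp' (Kop lm mu X) = lm * fa X ∧ fq' (Kop lm mu X) = lm * fb X ∧
    fr' (Kop lm mu X) = lm * fc X := by
  simp [Kop]
  ring_nf
  simp only [and_self]

end Coordinates

section

variable (lm mu : ℝ) (X Y : M7)

lemma gmet_Iop_Iop : gmet lm mu (Iop X) (Iop Y) = gmet lm mu X Y := by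
  simp only [gmet, coords_Iop]
  ring

lemma gmet_Jop_Jop (h : lm * mu = 1) :
    gmet lm mu (Jop lm mu X) (Jop lm mu Y) = gmet lm mu X Y := by
  calc gmet lm mu (Jop lm mu X) (Jop lm mu Y) = lm * mu * gmet lm mu X Y := by
        simp only [gmet, coords_Jop]; ring
    _ = gmet lm mu X Y := by rw [h, one_mul]

lemma gmet_Kop_Kop (h : lm * mu = 1) :
    gmet lm mu (Kop lm mu X) (Kop lm mu Y) = gmet lm mu X Y := by
  calc gmet lm mu (Kop lm mu X) (Kop lm mu Y) = lm * mu * gmet lm mu X Y := by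
        simp only [gmet, coords_Kop]; ring
    _ = gmet lm mu X Y := by rw [h, one_mul]

lemma omI_eq_gmet_Iop : omI lm mu X Y = gmet lm mu X (Iop Y) := by
  simp only [omI, om0, omt0, wdg2, gmet, coords_Iop]
  ring

lemma omJ_eq_gmet_Jop (h : lm * mu = 1) : omJ X Y = gmet lm mu X (Jop lm mu Y) := by
  calc omJ X Y = lm * mu * omJ X Y := by rw [h, one_mul]
    _ = gmet lm mu X (Jop lm mu Y) := by simp only [omJ, wdg2, gmet, coords_Jop]; ring

lemma omK_eq_gmet_Kop (h : lm * mu = 1) : omK X Y = gmet lm mu X (Kop lm mu Y) := by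
  calc omK X Y = lm * mu * omK X Y := by rw [h, one_mul]
    _ = gmet lm mu X (Kop lm mu Y) := by simp only [omK, wdg2, gmet, coords_Kop]; ring

end

theorem stmt7_general (lm mu : ℝ) (h : lm * mu = 1) :
    ∀ X ∈ mm, ∀ Y ∈ mm,
      gmet lm mu (Iop X) (Iop Y) = gmet lm mu X Y ∧
      gmet lm mu (Jop lm mu X) (Jop lm mu Y) = gmet lm mu X Y ∧
      gmet lm mu (Kop lm mu X) (Kop lm mu Y) = gmet lm mu X Y ∧
      omI lm mu X Y = gmet lm mu X (Iop Y) ∧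
      omJ X Y = gmet lm mu X (Jop lm mu Y) ∧
      omK X Y = gmet lm mu X (Kop lm mu Y) := by
  intro X _ Y _
  exact ⟨gmet_Iop_Iop lm mu X Y, gmet_Jop_Jop lm mu X Y h, gmet_Kop_Kop lm mu X Y h,
    omI_eq_gmet_Iop lm mu X Y, omJ_eq_gmet_Jop lm mu X Y h, omK_eq_gmet_Kop lm mu X Y h⟩

/-- for λ, μ > 0 with λμ = 1, g is compatible with I, J, K and
ω_I, ω_J, ω_K are the associated Kähler forms. -/
theorem stmt7 (lm mu : ℝ) (hl : 0 < lm) (hm : 0 < mu) (h : lm * mu = 1) :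
    ∀ X ∈ mm, ∀ Y ∈ mm,
      gmet lm mu (Iop X) (Iop Y) = gmet lm mu X Y ∧
      gmet lm mu (Jop lm mu X) (Jop lm mu Y) = gmet lm mu X Y ∧
      gmet lm mu (Kop lm mu X) (Kop lm mu Y) = gmet lm mu X Y ∧
      omI lm mu X Y = gmet lm mu X (Iop Y) ∧
      omJ X Y = gmet lm mu X (Jop lm mu Y) ∧
      omK X Y = gmet lm mu X (Kop lm mu Y) :=
  stmt7_general lm mu h
end

section
/- The 3-form Φ is an eigenvector of eigenvalue 1 for the operator L_I: for all X, Y, Z ∈ 𝔪 one has Φ(IX,IY,Z) + Φ(IX,Y,IZ) + Φ(X,IY,IZ) = Φ(X,Y,Z). -/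
/-!
Common setup: 𝔤 = 𝔰𝔬(7) realised as real skew-symmetric 7×7 matrices with
bracket `bk X Y = X*Y - Y*X`; the matrices A, B, C, A', B', C', P, Q, R, P', Q', R', E;
the subspaces 𝔪 (`mm`) and 𝔲(3) (`u3`); the dual functionals a, …, r' (written
`fa, …, fr'`), given by the explicit formulas that characterise them as the unique
linear functionals on 𝔰𝔬(7) vanishing on 𝔲(3) whose restrictions to 𝔪 are dual to
the chosen basis; the invariant forms; the endomorphisms I, J, K; and the
Chevalley–Eilenberg differentials `dM1`, `dM2` restricted to 𝔪.
-/

open Matrix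

/-!
The transpose of `I` acts on the coframe by `a ↦ -a'`, `a' ↦ a` (likewise for `b, c, p, q, r`),
so the `(1,0)`-forms of the complex structure `I` are spanned by `a + i a', …, r + i r'`.
On a wedge of three 1-forms `L_I` applies `I^*` to two of the three factors in all three ways;
hence it multiplies forms of type `(3,0) + (0,3)` by `-3` and forms of type `(2,1) + (1,2)` by
`-1 + 1 + 1 = 1`, and `Φ` is of the latter type. Once `I^*` is substituted, the eigenvalue
equation is a polynomial identity in the coframe values of `X`, `Y`, `Z`.
-/

section CoframeAction

attribute [local simp] Iop mA mB mC mA' mB' mC' mP mQ mR mP' mQ' mR' Eij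

lemma fa_Iop (X : M7) : fa (Iop X) = -fa' X := by simp [fa, fa']; ring
lemma fb_Iop (X : M7) : fb (Iop X) = -fb' X := by simp [fb, fb']; ring
lemma fc_Iop (X : M7) : fc (Iop X) = -fc' X := by simp [fc, fc']; ring
lemma fp_Iop (X : M7) : fp (Iop X) = -fp' X := by simp [fp, fp']; ring
lemma fq_Iop (X : M7) : fq (Iop X) = -fq' X := by simp [fq, fq']; ring
lemma fr_Iop (X : M7) : fr (Iop X) = -fr' X := by simp [fr, fr']; ring
lemma fa'_Iop (X : M7) : fa' (Iop X) = fa X := by simp [fa, fa']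
lemma fb'_Iop (X : M7) : fb' (Iop X) = fb X := by simp [fb, fb']
lemma fc'_Iop (X : M7) : fc' (Iop X) = fc X := by simp [fc, fc']
lemma fp'_Iop (X : M7) : fp' (Iop X) = fp X := by simp [fp, fp']; ring
lemma fq'_Iop (X : M7) : fq' (Iop X) = fq X := by simp [fq, fq']; ring
lemma fr'_Iop (X : M7) : fr' (Iop X) = fr X := by simp [fr, fr']; ring

end CoframeAction

/-- Φ is an eigenvector of eigenvalue 1 for L_I. -/
theorem stmt14 :
    ∀ X ∈ mm, ∀ Y ∈ mm, ∀ Z ∈ mm,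
      Phi (Iop X) (Iop Y) Z + Phi (Iop X) Y (Iop Z) + Phi X (Iop Y) (Iop Z)
        = Phi X Y Z := by
  intro X _ Y _ Z _
  simp only [Phi, wdg3, fa_Iop, fb_Iop, fc_Iop, fp_Iop, fq_Iop, fr_Iop,
    fa'_Iop, fb'_Iop, fc'_Iop, fp'_Iop, fq'_Iop, fr'_Iop]
  ring
end

section
/- For λ, μ > 0 with λμ = 1, the 3-form d_Mω_I is primitive with respect to ω_I: for every g-orthonormal basis (u₁,…,u₁₂) of 𝔪 and every Z ∈ 𝔪 one has Σᵢ (d_Mω_I)(uᵢ, Iuᵢ, Z) = 0; equivalently, d_Mω_I is g-orthogonal to all 3-forms of the form ω_I ∧ α with α a linear functional on 𝔪. -/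
/-!
Common setup: 𝔤 = 𝔰𝔬(7) realised as real skew-symmetric 7×7 matrices with
bracket `bk X Y = X*Y - Y*X`; the matrices A, B, C, A', B', C', P, Q, R, P', Q', R', E;
the subspaces 𝔪 (`mm`) and 𝔲(3) (`u3`); the dual functionals a, …, r' (written
`fa, …, fr'`), given by the explicit formulas that characterise them as the unique
linear functionals on 𝔰𝔬(7) vanishing on 𝔲(3) whose restrictions to 𝔪 are dual to
the chosen basis; the invariant forms; the endomorphisms I, J, K; and the
Chevalley–Eilenberg differentials `dM1`, `dM2` restricted to 𝔪.
-/

open Matrix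

/-!
Write the orthonormal basis as `u i = ∑ k, C i k • X k` in the basis `X k` of 𝔪 formed by
A, B, C, P, Q, R followed by their images under I. Since g is diagonal in that basis,
orthonormality (`C * diagonal d * Cᵀ = 1`) forces `∑ i, C i k * C i l = 0` for `k ≠ l`, so the
sum reduces to a weighted sum of the terms `d_Mω_I(X, IX, Z)` with `X = X k`, and each of these
vanishes. In `d_Mω_I(X, IX, Z) = -ω_I([X,IX],Z) + ω_I([X,Z],IX) - ω_I([IX,Z],X)` the first term
dies because `[X, IX] ∈ 𝔲(3)`; the other two are multiples of the trace-form pairings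
`tr(Xᵀ[X,Z])` and `tr((IX)ᵀ[IX,Z])`, which vanish by ad-invariance of the trace form.
-/

theorem Matrix.trace_transpose_mul_lie_self {n R : Type*} [Fintype n] [CommRing R]
    {X : Matrix n n R} (hX : Xᵀ = -X) (W : Matrix n n R) : (Xᵀ * ⁅X, W⁆).trace = 0 := by
  rw [hX, Ring.lie_def, neg_mul, mul_sub, ← mul_assoc, ← mul_assoc, trace_neg, trace_sub,
    trace_mul_cycle X W X, sub_self, neg_zero]

theorem Matrix.transpose_mul_apply_eq_zero_of_ne {ι R : Type*} [Fintype ι] [DecidableEq ι]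
    [CommRing R] {C : Matrix ι ι R} {d : ι → R} (hC : C * diagonal d * Cᵀ = 1) {k l : ι}
    (hkl : k ≠ l) : (Cᵀ * C) k l = 0 := by
  have hD : diagonal d * (Cᵀ * C) = 1 := by
    rw [← mul_assoc]; exact mul_eq_one_comm.mp (by rwa [← mul_assoc])
  have hdiag : d k * (Cᵀ * C) k k = 1 := by simpa using congrFun (congrFun hD k) k
  have hoff : d k * (Cᵀ * C) k l = 0 := by simpa [hkl] using congrFun (congrFun hD k) l
  calc (Cᵀ * C) k l = (Cᵀ * C) k k * (d k * (Cᵀ * C) k l) := by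
        rw [← mul_assoc, mul_comm _ (d k), hdiag, one_mul]
    _ = 0 := by rw [hoff, mul_zero]

/-- `hC` says that the vectors `u i = ∑ k, C i k • e k` are orthonormal for the diagonal form
`∑ k, d k * x k * y k`. -/
theorem LinearMap.BilinForm.sum_apply_self_eq_zero {ι R V : Type*} [Fintype ι] [DecidableEq ι]
    [CommRing R] [AddCommGroup V] [Module R V] (B : LinearMap.BilinForm R V) {e u : ι → V}
    {C : Matrix ι ι R} {d : ι → R} (hC : C * diagonal d * Cᵀ = 1)
    (hu : ∀ i, u i = ∑ k, C i k • e k) (hB : ∀ k, B (e k) (e k) = 0) :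
    ∑ i, B (u i) (u i) = 0 := by
  have expand : ∀ i, B (u i) (u i) = ∑ k, ∑ l, C i k * C i l * B (e k) (e l) := by
    intro i
    simp only [hu, map_sum, map_smul, LinearMap.sum_apply, LinearMap.smul_apply, smul_eq_mul,
      Finset.mul_sum]
    rw [Finset.sum_comm]
    exact Finset.sum_congr rfl fun k _ => Finset.sum_congr rfl fun l _ => by ring
  simp only [expand]
  rw [Finset.sum_comm]
  refine Finset.sum_eq_zero fun k _ => ?_
  rw [Finset.sum_comm]
  refine Finset.sum_eq_zero fun l _ => ?_
  rw [← Finset.sum_mul]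
  by_cases hkl : k = l
  · rw [hkl, hB, mul_zero]
  · have hCkl : ∑ i, C i k * C i l = (Cᵀ * C) k l := by simp [mul_apply]
    rw [hCkl, transpose_mul_apply_eq_zero_of_ne hC hkl, zero_mul]

namespace SO7

noncomputable section

def basisM : Fin 12 → M7
  | 0 => mA | 1 => mB | 2 => mC | 3 => mP | 4 => mQ | 5 => mR
  | 6 => mA' | 7 => mB' | 8 => mC' | 9 => mP' | 10 => mQ' | 11 => mR'

def coordM : Fin 12 → M7 → ℝ
  | 0 => fa | 1 => fb | 2 => fc | 3 => fp | 4 => fq | 5 => fr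
  | 6 => fa' | 7 => fb' | 8 => fc' | 9 => fp' | 10 => fq' | 11 => fr'

def weight (lm mu : ℝ) : Fin 12 → ℝ
  | 0 | 1 | 2 | 6 | 7 | 8 => lm
  | _ => mu

def sgnI (k : Fin 12) : ℝ := if k < 6 then 1 else -1

lemma bk_eq_lie (X Y : M7) : bk X Y = ⁅X, Y⁆ := (Ring.lie_def X Y).symm

lemma bk_add_left (X X' Y : M7) : bk (X + X') Y = bk X Y + bk X' Y := by
  simp only [bk, add_mul, mul_add]; abel

lemma bk_add_right (X Y Y' : M7) : bk X (Y + Y') = bk X Y + bk X Y' := by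
  simp only [bk, add_mul, mul_add]; abel

lemma bk_smul_left (s : ℝ) (X Y : M7) : bk (s • X) Y = s • bk X Y := by
  simp only [bk, smul_mul_assoc, mul_smul_comm, smul_sub]

lemma bk_smul_right (s : ℝ) (X Y : M7) : bk X (s • Y) = s • bk X Y := by
  simp only [bk, smul_mul_assoc, mul_smul_comm, smul_sub]

lemma add_six_add_six (k : Fin 12) : k + 6 + 6 = k := by
  rw [add_assoc]; exact add_zero k

lemma basisM_transpose (k : Fin 12) : (basisM k)ᵀ = -basisM k := by
  fin_cases k <;>
    simp [basisM, mA, mB, mC, mA', mB', mC', mP, mQ, mR, mP', mQ', mR', Eij, transpose_single] <;>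
    abel

lemma coordM_basisM (k l : Fin 12) : coordM k (basisM l) = if k = l then 1 else 0 := by
  fin_cases k <;> fin_cases l <;>
    simp [coordM, basisM, fa, fb, fc, fa', fb', fc', fp, fq, fr, fp', fq', fr',
      mA, mB, mC, mA', mB', mC', mP, mQ, mR, mP', mQ', mR', Eij] <;> norm_num

lemma coordM_eq_trace (k : Fin 12) (W : M7) :
    coordM k W = ((basisM k)ᵀ * W).trace / ((basisM k)ᵀ * basisM k).trace := by
  rw [basisM_transpose]
  fin_cases k <;>
    simp [coordM, basisM, fa, fb, fc, fa', fb', fc', fp, fq, fr, fp', fq', fr',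
      mA, mB, mC, mA', mB', mC', mP, mQ, mR, mP', mQ', mR', Eij, sub_mul,
      trace_single_mul] <;> ring

lemma coordM_add (k : Fin 12) (X Y : M7) : coordM k (X + Y) = coordM k X + coordM k Y := by
  simp only [coordM_eq_trace, mul_add, trace_add, add_div]

lemma coordM_smul (k : Fin 12) (s : ℝ) (X : M7) : coordM k (s • X) = s * coordM k X := by
  simp only [coordM_eq_trace, mul_smul_comm, trace_smul, smul_eq_mul, mul_div_assoc]

def coordL (k : Fin 12) : M7 →ₗ[ℝ] ℝ where
  toFun := coordM k
  map_add' := coordM_add k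
  map_smul' := coordM_smul k

lemma coordM_bk_basisM_self (k : Fin 12) (W : M7) : coordM k (bk (basisM k) W) = 0 := by
  rw [coordM_eq_trace, bk_eq_lie, trace_transpose_mul_lie_self (basisM_transpose k), zero_div]

/-- As `basisM (k + 6) = ±I (basisM k)`, this says that `[X, IX]` has no 𝔪-component. -/
lemma coordM_bk_basisM_add_six (j k : Fin 12) :
    coordM j (bk (basisM k) (basisM (k + 6))) = 0 := by
  fin_cases k <;>
  · simp only [basisM, mA, mB, mC, mA', mB', mC', mP, mQ, mR, mP', mQ', mR', Eij, bk,
      sub_mul, mul_sub, Fin.isValue]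
    fin_cases j <;>
      simp [coordM, fa, fb, fc, fa', fb', fc', fp, fq, fr, fp', fq', fr']

lemma mm_eq_span_range_basisM : mm = Submodule.span ℝ (Set.range basisM) := by
  unfold mm
  congr 1
  ext X
  simp only [Set.mem_insert_iff, Set.mem_singleton_iff, Set.mem_range, Fin.exists_fin_succ,
    Fin.exists_fin_zero, Fin.reduceSucc, basisM, or_false, @eq_comm _ _ X]
  tauto

lemma sum_coordM_smul_basisM {X : M7} (hX : X ∈ mm) : ∑ k, coordM k X • basisM k = X := by
  rw [mm_eq_span_range_basisM, Submodule.mem_span_range_iff_exists_fun] at hX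
  obtain ⟨c, rfl⟩ := hX
  have : ∀ k, coordM k (∑ l, c l • basisM l) = c k := by
    intro k
    have h := map_sum (coordL k) (fun l => c l • basisM l) Finset.univ
    simp only [coordL, LinearMap.coe_mk, AddHom.coe_mk] at h
    simp [h, coordM_smul, coordM_basisM]
  simp only [this]

lemma gmet_eq_sum (lm mu : ℝ) (X Y : M7) :
    gmet lm mu X Y = ∑ k, weight lm mu k * (coordM k X * coordM k Y) := by
  simp only [Fin.sum_univ_succ, Fin.sum_univ_zero, Fin.reduceSucc, coordM, weight, gmet]
  ring

lemma omI_eq_sum (lm mu : ℝ) (X Y : M7) :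
    omI lm mu X Y = ∑ k, sgnI k * weight lm mu k * coordM (k + 6) X * coordM k Y := by
  simp only [Fin.sum_univ_succ, Fin.sum_univ_zero, Fin.reduceSucc, Fin.reduceAdd, coordM, weight,
    sgnI, Fin.reduceLT, if_true, if_false, omI, om0, omt0, wdg2]
  ring

lemma Iop_eq_sum (X : M7) : Iop X = ∑ k, (sgnI k * coordM k X) • basisM (k + 6) := by
  simp only [Fin.sum_univ_succ, Fin.sum_univ_zero, Fin.reduceSucc, Fin.reduceAdd, coordM, basisM,
    sgnI, Fin.reduceLT, if_true, if_false, Iop]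
  module

lemma Iop_add (X Y : M7) : Iop (X + Y) = Iop X + Iop Y := by
  simp only [Iop_eq_sum, coordM_add, mul_add, add_smul, Finset.sum_add_distrib]

lemma Iop_smul (s : ℝ) (X : M7) : Iop (s • X) = s • Iop X := by
  simp only [Iop_eq_sum, coordM_smul, Finset.smul_sum, smul_smul, mul_left_comm]

lemma Iop_basisM (k : Fin 12) : Iop (basisM k) = sgnI k • basisM (k + 6) := by
  simp [Iop_eq_sum, coordM_basisM]

section omI

variable (lm mu : ℝ)

lemma omI_add_left (X X' Y : M7) : omI lm mu (X + X') Y = omI lm mu X Y + omI lm mu X' Y := by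
  simp only [omI_eq_sum, coordM_add, ← Finset.sum_add_distrib]
  exact Finset.sum_congr rfl fun k _ => by ring

lemma omI_add_right (X Y Y' : M7) : omI lm mu X (Y + Y') = omI lm mu X Y + omI lm mu X Y' := by
  simp only [omI_eq_sum, coordM_add, ← Finset.sum_add_distrib]
  exact Finset.sum_congr rfl fun k _ => by ring

lemma omI_smul_left (s : ℝ) (X Y : M7) : omI lm mu (s • X) Y = s * omI lm mu X Y := by
  simp only [omI_eq_sum, coordM_smul, Finset.mul_sum]
  exact Finset.sum_congr rfl fun k _ => by ring

lemma omI_smul_right (s : ℝ) (X Y : M7) : omI lm mu X (s • Y) = s * omI lm mu X Y := by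
  simp only [omI_eq_sum, coordM_smul, Finset.mul_sum]
  exact Finset.sum_congr rfl fun k _ => by ring

lemma omI_basisM (X : M7) (k : Fin 12) :
    omI lm mu X (basisM k) = sgnI k * weight lm mu k * coordM (k + 6) X := by
  simp [omI_eq_sum, coordM_basisM]

lemma dM2_omI_basisM_Iop (k : Fin 12) (Z : M7) :
    dM2 (omI lm mu) (basisM k) (Iop (basisM k)) Z = 0 := by
  have hcomm : omI lm mu (bk (basisM k) (basisM (k + 6))) Z = 0 := by
    simp only [omI_eq_sum, coordM_bk_basisM_add_six, mul_zero, zero_mul, Finset.sum_const_zero]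
  simp only [dM2, Iop_basisM, bk_smul_right, bk_smul_left, omI_smul_left, omI_smul_right,
    omI_basisM, add_six_add_six, coordM_smul, coordM_bk_basisM_self, hcomm]
  ring

def dMomIForm (Z : M7) : LinearMap.BilinForm ℝ M7 :=
  LinearMap.mk₂ ℝ (fun X Y => dM2 (omI lm mu) X (Iop Y) Z)
    (fun X X' Y => by simp only [dM2, bk_add_left, omI_add_left, omI_add_right]; ring)
    (fun s X Y => by
      simp only [dM2, bk_smul_left, omI_smul_left, omI_smul_right, smul_eq_mul]; ring)
    (fun X Y Y' => by
      simp only [dM2, Iop_add, bk_add_right, bk_add_left, omI_add_left, omI_add_right]; ring)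
    (fun s X Y => by
      simp only [dM2, Iop_smul, bk_smul_right, bk_smul_left, omI_smul_left, omI_smul_right,
        smul_eq_mul]; ring)

end omI

end

end SO7

theorem stmt18_general (lm mu : ℝ) :
    ∀ u : Fin 12 → M7,
      (∀ i, u i ∈ mm) →
      (∀ i j, gmet lm mu (u i) (u j) = if i = j then 1 else 0) →
      (∀ X ∈ mm, X ∈ Submodule.span ℝ (Set.range u)) →
      ∀ Z ∈ mm, ∑ i : Fin 12, dM2 (omI lm mu) (u i) (Iop (u i)) Z = 0 := by
  intro u hu hon _ Z _
  set C : Matrix (Fin 12) (Fin 12) ℝ := of fun i k => SO7.coordM k (u i)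
  have hgram : C * diagonal (SO7.weight lm mu) * Cᵀ = 1 := by
    ext i j
    rw [one_apply, ← hon i j, SO7.gmet_eq_sum, mul_apply]
    simp only [mul_diagonal, transpose_apply, C, of_apply]
    exact Finset.sum_congr rfl fun k _ => by ring
  exact (SO7.dMomIForm lm mu Z).sum_apply_self_eq_zero hgram
    (fun i => (SO7.sum_coordM_smul_basisM (hu i)).symm) (SO7.dM2_omI_basisM_Iop lm mu · Z)

/-- for λ, μ > 0 with λμ = 1, the 3-form d_Mω_I is primitive: for every
g-orthonormal basis (u₁,…,u₁₂) of 𝔪 and every Z ∈ 𝔪, Σᵢ d_Mω_I(uᵢ, Iuᵢ, Z) = 0. -/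
theorem stmt18 (lm mu : ℝ) (hl : 0 < lm) (hm : 0 < mu) (h : lm * mu = 1) :
    ∀ u : Fin 12 → M7,
      (∀ i, u i ∈ mm) →
      (∀ i j, gmet lm mu (u i) (u j) = if i = j then 1 else 0) →
      (∀ X ∈ mm, X ∈ Submodule.span ℝ (Set.range u)) →
      ∀ Z ∈ mm, ∑ i : Fin 12, dM2 (omI lm mu) (u i) (Iop (u i)) Z = 0 :=
  stmt18_general lm mu
end
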